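/- Assume E = ℂⁿ and Φ, Ψ ∈ L^∞_{B(E)}(𝕋) (n×n matrix-valued bounded symbols). Suppose there exists an n×n complex matrix A with all entries of modulus at most 1 such that Φ(I−A) ∈ H^∞_{B(E)} and AΨ ∈ H^∞_{B(E)}. Then the product of the block Hankel operator H_Φ and the block Toeplitz operator T_Ψ on H²_E satisfies H_Φ T_Ψ = H_{ΦAΨ}; in particular H_Φ T_Ψ is a block Hankel operator. -/

import Mathlib

noncomputable section

/- We model the `ℂⁿ`-valued `L²` space of the circle as an abstract complex Hilbert space `H`
with Hilbert basis `b : ℤ × Fin n → H` (the functions `z^k eᵢ`).  `H²_E` is the closed span of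
`b (k, i)`, `k ≥ 0`, with Riesz projection `P`.  The (scalar) bilateral shift `W` satisfies
`W (b (k,i)) = b (k+1, i)`; a bounded operator represents multiplication by a `B(E)`-valued
`L^∞` function iff it commutes with `W`.  The flip `J` satisfies `J (b (k,i)) = b (−k−1, i)`.
A constant matrix `A` acts as the operator `M_A` with `M_A (b (k,i)) = ∑_j A_{ji} b (k,j)`.
Membership in `H^∞_{B(E)}` means the multiplication operator leaves `H²_E` invariant.
For `h ∈ H²_E`: `T_Ψ h = P(M_Ψ h)` and `H_Φ h = P(J(M_Φ h))`. -/

noncomputable def hardyE {H : Type*} [NormedAddCommGroup H] [InnerProductSpace ℂ H]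
    [CompleteSpace H] {n : ℕ} (b : HilbertBasis (ℤ × Fin n) ℂ H) : Submodule ℂ H :=
  (Submodule.span ℂ (Set.range fun p : ℕ × Fin n => b ((p.1 : ℤ), p.2))).topologicalClosure

noncomputable def hardyProjE {H : Type*} [NormedAddCommGroup H] [InnerProductSpace ℂ H]
    [CompleteSpace H] {n : ℕ} (b : HilbertBasis (ℤ × Fin n) ℂ H) : H →L[ℂ] H :=
  haveI : CompleteSpace (hardyE b) :=
    (Submodule.isClosed_topologicalClosure _).completeSpace_coe
  (hardyE b).subtypeL.comp ((hardyE b).orthogonalProjectionOnto)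

/-! `H_Φ T_Ψ h = P J M_Φ (P M_Ψ h)` and `H_{ΦAΨ} h = P J M_Φ (M_A M_Ψ h)`.  Since `M_A` is
multiplication by a constant matrix, both `M_A` and its adjoint `M_{A*}` preserve `H²_E`, so
`M_A` also preserves `(H²_E)ᗮ`.  Hence `M_A (g - P g)`, with `g = M_Ψ h`, lies in `(H²_E)ᗮ`;
since `AΨ` is analytic it also lies in `H²_E`, so `M_A g = M_A (P g)`.  It remains to see that
`P J M_Φ (P g - M_A P g) = 0`, which holds because `Φ(I - A)` is analytic and `J` maps `H²_E`
into `(H²_E)ᗮ`. -/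

namespace Submodule

variable {𝕜 E : Type*} [RCLike 𝕜] [NormedAddCommGroup E] [InnerProductSpace 𝕜 E]
  [CompleteSpace E]

theorem apply_starProjection_eq_of_mem (K : Submodule 𝕜 E) [K.HasOrthogonalProjection]
    {T : E →L[𝕜] E} (hT : Set.MapsTo T K K) (hT' : Set.MapsTo T.adjoint K K)
    {g : E} (hg : T g ∈ K) : T (K.starProjection g) = T g := by
  have h_invt : Kᗮ ∈ Module.End.invtSubmodule T.toLinearMap :=
    ContinuousLinearMap.orthogonal_mem_invtSubmodule
      ((Module.End.mem_invtSubmodule_iff_forall_mem_of_mem _).mpr fun _ hx => hT' hx)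
  have h_orth : T (g - K.starProjection g) ∈ Kᗮ :=
    (Module.End.mem_invtSubmodule_iff_forall_mem_of_mem _).mp h_invt _
      (K.sub_starProjection_mem_orthogonal g)
  have h_mem : T (g - K.starProjection g) ∈ K := by
    rw [map_sub]
    exact K.sub_mem hg (hT (K.starProjection_apply_mem g))
  have h_zero : T (g - K.starProjection g) = 0 := by
    simpa using K.inf_orthogonal_eq_bot.le ⟨h_mem, h_orth⟩
  rwa [map_sub, sub_eq_zero, eq_comm] at h_zero

end Submodule

section Hardy

variable {H : Type*} [NormedAddCommGroup H] [InnerProductSpace ℂ H] [CompleteSpace H]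
  {n : ℕ} (b : HilbertBasis (ℤ × Fin n) ℂ H)

instance : CompleteSpace (hardyE b) :=
  (Submodule.isClosed_topologicalClosure _).completeSpace_coe

theorem hardyProjE_eq_starProjection : hardyProjE b = (hardyE b).starProjection := rfl

theorem basis_mem_hardyE (k : ℕ) (i : Fin n) : b ((k : ℤ), i) ∈ hardyE b :=
  Submodule.le_topologicalClosure _ (Submodule.subset_span ⟨(k, i), rfl⟩)

theorem mapsTo_hardyE_of_basis {K : Submodule ℂ H} (hK : IsClosed (K : Set H))
    (T : H →L[ℂ] H) (hT : ∀ (k : ℕ) (i : Fin n), T (b ((k : ℤ), i)) ∈ K) :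
    Set.MapsTo T (hardyE b) K := by
  have hle : hardyE b ≤ K.comap (T : H →ₗ[ℂ] H) := by
    refine Submodule.topologicalClosure_minimal _ ?_ (hK.preimage T.continuous)
    rw [Submodule.span_le]
    rintro _ ⟨p, rfl⟩
    exact hT p.1 p.2
  exact fun _ hx => hle hx

theorem basis_mem_orthogonal_hardyE {m : ℤ} (hm : m < 0) (i : Fin n) :
    b (m, i) ∈ (hardyE b)ᗮ := by
  rw [Submodule.mem_orthogonal']
  intro u hu
  refine (Submodule.mem_orthogonal_singleton_iff_inner_right).mp
    (mapsTo_hardyE_of_basis b (Submodule.isClosed_orthogonal _) (.id ℂ H) ?_ hu)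
  intro k j
  rw [ContinuousLinearMap.id_apply, Submodule.mem_orthogonal_singleton_iff_inner_right,
    b.orthonormal.inner_eq_zero]
  simp only [ne_eq, Prod.mk.injEq, not_and]
  omega

theorem adjoint_apply_basis_of_matrix {M : H →L[ℂ] H} {A : Matrix (Fin n) (Fin n) ℂ}
    (hM : ∀ (k : ℤ) (i : Fin n), M (b (k, i)) = ∑ j : Fin n, A j i • b (k, j))
    (k : ℤ) (i : Fin n) :
    M.adjoint (b (k, i)) = ∑ j : Fin n, A.conjTranspose j i • b (k, j) := by
  apply b.repr.injective
  ext ⟨m, l⟩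
  have hb := orthonormal_iff_ite.mp b.orthonormal
  rw [b.repr_apply_apply, b.repr_apply_apply, ContinuousLinearMap.adjoint_inner_right, hM m l]
  simp only [sum_inner, inner_sum, inner_smul_left, inner_smul_right, hb,
    Matrix.conjTranspose_apply]
  by_cases hmk : m = k
  · subst hmk
    simp [Prod.ext_iff]
  · simp [Prod.ext_iff, hmk]

theorem mapsTo_hardyE_of_matrix {M : H →L[ℂ] H} {A : Matrix (Fin n) (Fin n) ℂ}
    (hM : ∀ (k : ℤ) (i : Fin n), M (b (k, i)) = ∑ j : Fin n, A j i • b (k, j)) :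
    Set.MapsTo M (hardyE b) (hardyE b) := by
  refine mapsTo_hardyE_of_basis b (Submodule.isClosed_topologicalClosure _) M fun k i => ?_
  rw [hM]
  exact Submodule.sum_mem _ fun j _ => Submodule.smul_mem _ _ (basis_mem_hardyE b k j)

theorem hardyProjE_flip_eq_zero {J : H →L[ℂ] H}
    (hJ : ∀ (k : ℤ) (i : Fin n), J (b (k, i)) = b (-k - 1, i)) {x : H} (hx : x ∈ hardyE b) :
    hardyProjE b (J x) = 0 := by
  rw [hardyProjE_eq_starProjection, Submodule.starProjection_apply_eq_zero_iff]
  refine mapsTo_hardyE_of_basis b (Submodule.isClosed_orthogonal _) J (fun k i => ?_) hx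
  rw [hJ]
  exact basis_mem_orthogonal_hardyE b (by omega) i

end Hardy

theorem stmt17_general {H : Type*} [NormedAddCommGroup H] [InnerProductSpace ℂ H] [CompleteSpace H]
    (n : ℕ) (b : HilbertBasis (ℤ × Fin n) ℂ H)
    (J MΦ MΨ MA : H →L[ℂ] H) (A : Matrix (Fin n) (Fin n) ℂ)
    (hJ : ∀ (k : ℤ) (i : Fin n), J (b (k, i)) = b (-k - 1, i))
    -- `MA` is multiplication by the constant matrix `A`:
    (hMA : ∀ (k : ℤ) (i : Fin n), MA (b (k, i)) = ∑ j : Fin n, A j i • b (k, j))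
    -- `Φ(I−A) ∈ H^∞_{B(E)}`:
    (hΦA : ∀ h ∈ hardyE b, MΦ (h - MA h) ∈ hardyE b)
    -- `AΨ ∈ H^∞_{B(E)}`:
    (hAΨ : ∀ h ∈ hardyE b, MA (MΨ h) ∈ hardyE b) :
    ∀ h ∈ hardyE b,
      hardyProjE b (J (MΦ (hardyProjE b (MΨ h)))) =
        hardyProjE b (J (MΦ (MA (MΨ h)))) := by
  intro h hh
  set g := MΨ h
  have hPg : hardyProjE b g ∈ hardyE b := (hardyE b).starProjection_apply_mem g
  have hMA_Pg : MA (hardyProjE b g) = MA g :=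
    (hardyE b).apply_starProjection_eq_of_mem (mapsTo_hardyE_of_matrix b hMA)
      (mapsTo_hardyE_of_matrix b (adjoint_apply_basis_of_matrix b hMA)) (hAΨ h hh)
  have h_zero := hardyProjE_flip_eq_zero b hJ (hΦA _ hPg)
  rwa [map_sub, map_sub, map_sub, sub_eq_zero, hMA_Pg] at h_zero

/-- if there is a matrix `A` with entries of modulus at most `1` such that
`Φ(I−A) ∈ H^∞_{B(E)}` and `AΨ ∈ H^∞_{B(E)}`, then `H_Φ T_Ψ = H_{ΦAΨ}`; in particular
`H_Φ T_Ψ` is a block Hankel operator. -/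
theorem stmt17 {H : Type*} [NormedAddCommGroup H] [InnerProductSpace ℂ H] [CompleteSpace H]
    (n : ℕ) (b : HilbertBasis (ℤ × Fin n) ℂ H)
    (W J MΦ MΨ MA : H →L[ℂ] H) (A : Matrix (Fin n) (Fin n) ℂ)
    (hW : ∀ (k : ℤ) (i : Fin n), W (b (k, i)) = b (k + 1, i))
    (hJ : ∀ (k : ℤ) (i : Fin n), J (b (k, i)) = b (-k - 1, i))
    -- `MΦ`, `MΨ` are multiplication operators by `L^∞` matrix symbols `Φ`, `Ψ`:
    (hΦ : MΦ ∘L W = W ∘L MΦ)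
    (hΨ : MΨ ∘L W = W ∘L MΨ)
    -- `MA` is multiplication by the constant matrix `A`:
    (hMA : ∀ (k : ℤ) (i : Fin n), MA (b (k, i)) = ∑ j : Fin n, A j i • b (k, j))
    -- entries of `A` have modulus at most 1:
    (hA : ∀ i j, ‖A i j‖ ≤ 1)
    -- `Φ(I−A) ∈ H^∞_{B(E)}`:
    (hΦA : ∀ h ∈ hardyE b, MΦ (h - MA h) ∈ hardyE b)
    -- `AΨ ∈ H^∞_{B(E)}`:
    (hAΨ : ∀ h ∈ hardyE b, MA (MΨ h) ∈ hardyE b) :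
    ∀ h ∈ hardyE b,
      hardyProjE b (J (MΦ (hardyProjE b (MΨ h)))) =
        hardyProjE b (J (MΦ (MA (MΨ h)))) :=
  stmt17_general n b J MΦ MΨ MA A hJ hMA hΦA hAΨ
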